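/- arXiv:2012.01848 — 4 statements merged into one kernel-verified Lean document; each statement's English description precedes it below -/
import Mathlib

section
/- Let b be a continuous symmetric positive-definite bilinear form on a Hilbert space X and q a quadratic functional with second derivative b. Suppose x minimizes q over x_0+V and δx ≠ 0 with b(δx,δx) > 0. Define the exact line-search step ω = -q'(x)(δx)/b(δx,δx) and x_+ = x + ω δx. If x_* is the global minimizer of q on x_0+V and δx ∈ V with q'(x_*)(δx)=0, then b(x_+ - x_*, x_+ - x) = 0 and consequently ‖x_* - x‖_b² = ‖x_* - x_+‖_b² + ‖x_+ - x‖_b², where ‖v‖_b² := b(v,v). -/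
/-!
The polarization of `q (y + δ) = q y + D y δ + b δ δ / 2` shows `D (y + d) = D y + b d`, so
`b (x_+ - x_*) δx = D x_+ δx - D x_* δx = D x_+ δx`, and `D x_+ δx = D x δx + ω b δx δx`.
Multiplied by `ω`, this is `ω D x δx + ω² b δx δx`, which vanishes for the exact step
`ω = -D x δx / b δx δx`. Pythagoras for the symmetric form `b` then gives the identity.
-/

section QuadraticFunctional

variable {X : Type*} [NormedAddCommGroup X] [NormedSpace ℝ X]
  {D : X → (X →L[ℝ] ℝ)} {b : X →L[ℝ] X →L[ℝ] ℝ}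

theorem apply_add_add_of_symm (hsymm : ∀ y z, b y z = b z y) (u v : X) :
    b (u + v) (u + v) = b u u + 2 * b u v + b v v := by
  simp only [map_add, add_apply, hsymm v u]
  ring

theorem apply_add_add_of_orthogonal (hsymm : ∀ y z, b y z = b z y) {u v : X}
    (huv : b u v = 0) : b (u + v) (u + v) = b u u + b v v := by
  rw [apply_add_add_of_symm hsymm, huv]
  ring

theorem deriv_add_of_quadratic {q : X → ℝ} (hsymm : ∀ y z, b y z = b z y)
    (hquad : ∀ y δ, q (y + δ) = q y + D y δ + b δ δ / 2) (y d v : X) :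
    D (y + d) v = D y v + b d v := by
  have h₁ := hquad y (d + v)
  have h₂ := hquad (y + d) v
  rw [← add_assoc, h₂, hquad y d, map_add, apply_add_add_of_symm hsymm] at h₁
  linarith

end QuadraticFunctional

/-- Holds also when `c = 0`, where `-a / c = 0`. -/
theorem neg_div_mul_self_add_sq_mul_eq_zero (a c : ℝ) :
    -a / c * a + (-a / c) ^ 2 * c = 0 := by
  rcases eq_or_ne c 0 with rfl | hc
  · simp
  · field_simp
    ring

theorem stmt3_general
    {X : Type*} [NormedAddCommGroup X] [InnerProductSpace ℝ X]
    (q : X → ℝ) (D : X → (X →L[ℝ] ℝ)) (b : X →L[ℝ] X →L[ℝ] ℝ)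
    (hsymm : ∀ y z, b y z = b z y)
    (hquad : ∀ y δ, q (y + δ) = q y + D y δ + b δ δ / 2)
    (V : Submodule ℝ X) (x xstar δx : X)
    (hopt : ∀ v ∈ V, D xstar v = 0)
    (hδV : δx ∈ V) :
    b (x + (-(D x δx) / b δx δx) • δx - xstar)
      ((x + (-(D x δx) / b δx δx) • δx) - x) = 0 ∧
    b (xstar - x) (xstar - x)
      = b (xstar - (x + (-(D x δx) / b δx δx) • δx))
          (xstar - (x + (-(D x δx) / b δx δx) • δx))
        + b ((x + (-(D x δx) / b δx δx) • δx) - x)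
            ((x + (-(D x δx) / b δx δx) • δx) - x) := by
  set ω := -(D x δx) / b δx δx
  set xp := x + ω • δx
  have hstep : xp - x = ω • δx := add_sub_cancel_left x _
  have hgrad : b (xp - xstar) δx = D x δx + ω * b δx δx := by
    have h := deriv_add_of_quadratic hsymm hquad xstar (xp - xstar) δx
    rw [add_sub_cancel, hopt δx hδV, deriv_add_of_quadratic hsymm hquad, map_smul,
      smul_apply, smul_eq_mul] at h
    linarith
  have horth : b (xp - xstar) (xp - x) = 0 := by
    rw [hstep, map_smul, smul_eq_mul, hgrad, mul_add, ← mul_assoc, ← sq]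
    exact neg_div_mul_self_add_sq_mul_eq_zero _ _
  refine ⟨horth, ?_⟩
  have horth' : b (xstar - xp) (xp - x) = 0 := by
    rw [← neg_sub, map_neg, neg_apply, horth, neg_zero]
  rw [← apply_add_add_of_orthogonal hsymm horth', sub_add_sub_cancel]

/-- Exact line search for a quadratic functional: the new iterate
`x_+ = x + ω δx` with `ω = -q'(x)(δx)/b(δx,δx)` satisfies
`b(x_+ - x_*, x_+ - x) = 0`, and the Pythagoras identity
`‖x_* - x‖_b² = ‖x_* - x_+‖_b² + ‖x_+ - x‖_b²` holds. -/
theorem stmt3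
    {X : Type*} [NormedAddCommGroup X] [InnerProductSpace ℝ X] [CompleteSpace X]
    (q : X → ℝ) (D : X → (X →L[ℝ] ℝ)) (b : X →L[ℝ] X →L[ℝ] ℝ)
    (hderiv : ∀ y, HasFDerivAt q (D y) y)
    (hsymm : ∀ y z, b y z = b z y)
    (hquad : ∀ y δ, q (y + δ) = q y + D y δ + b δ δ / 2)
    (hpos : ∀ y, y ≠ 0 → 0 < b y y)
    (V : Submodule ℝ X) (x0 x xstar δx : X)
    (hx : x - x0 ∈ V) (hxstar : xstar - x0 ∈ V)
    (hopt : ∀ v ∈ V, D xstar v = 0)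
    (hδV : δx ∈ V) (hδne : δx ≠ 0) (hbδ : 0 < b δx δx) :
    b (x + (-(D x δx) / b δx δx) • δx - xstar)
      ((x + (-(D x δx) / b δx δx) • δx) - x) = 0 ∧
    b (xstar - x) (xstar - x)
      = b (xstar - (x + (-(D x δx) / b δx δx) • δx))
          (xstar - (x + (-(D x δx) / b δx δx) • δx))
        + b ((x + (-(D x δx) / b δx δx) • δx) - x)
            ((x + (-(D x δx) / b δx δx) • δx) - x) :=
  stmt3_general q D b hsymm hquad V x xstar δx hopt hδV
end

section
/- Let S, S̃ : U → Y be bounded linear operators between Hilbert spaces (with Y carrying a seminorm ‖·‖_G induced by a positive semidefinite bilinear form), ν > 0, and define M(x) for x = (y,u) by ⟨Mx, x⟩ = ‖y‖_G² + ν‖u‖_U². Then for all u ∈ U, with x = (Su, u) and x̃ = (S̃u, u): (1/(1 + ν⁻¹‖S̃‖²)) ⟨Mx̃, x̃⟩ ≤ ⟨Mx, x⟩ ≤ (1 + ν⁻¹‖S‖²) ⟨Mx̃, x̃⟩, where ‖S‖ denotes the operator norm from (U,‖·‖_U) to (Y,‖·‖_G). Hence the condition number satisfies κ ≤ (1 +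 ν⁻¹‖S‖²)(1 + ν⁻¹‖S̃‖²). -/
/-! Since `q(u) = ‖Su‖_G² + ν‖u‖²` and `‖Su‖_G² ≤ ‖S‖²‖u‖² = ν⁻¹‖S‖² · ν‖u‖²`, we get
`q(u) ≤ (1 + ν⁻¹‖S‖²) ν‖u‖² ≤ (1 + ν⁻¹‖S‖²) q̃(u)`; exchanging `S` and `S̃` gives the other bound. -/

theorem add_le_one_add_inv_mul_mul_add {a b c k ν : ℝ} (hν : 0 < ν) (hk : 0 ≤ k)
    (ha : a ≤ k * c) (hb : 0 ≤ b) :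
    a + ν * c ≤ (1 + ν⁻¹ * k) * (b + ν * c) := by
  calc a + ν * c ≤ k * c + ν * c := by linarith
    _ = (1 + ν⁻¹ * k) * (ν * c) := by field_simp; ring
    _ ≤ (1 + ν⁻¹ * k) * (b + ν * c) := by gcongr; linarith

theorem stmt8_general
    {U : Type*} [NormedAddCommGroup U] [InnerProductSpace ℝ U]
    {Y : Type*} [AddCommGroup Y] [Module ℝ Y]
    (g : Y →ₗ[ℝ] Y →ₗ[ℝ] ℝ)
    (hgpos : ∀ y, 0 ≤ g y y)
    (S St : U →ₗ[ℝ] Y) (nS nSt : ℝ)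
    (hSbound : ∀ u, g (S u) (S u) ≤ nS ^ 2 * ‖u‖ ^ 2)
    (hStbound : ∀ u, g (St u) (St u) ≤ nSt ^ 2 * ‖u‖ ^ 2)
    (ν : ℝ) (hν : 0 < ν) :
    ∀ u : U,
      (1 / (1 + ν⁻¹ * nSt ^ 2)) * (g (St u) (St u) + ν * ‖u‖ ^ 2)
          ≤ g (S u) (S u) + ν * ‖u‖ ^ 2 ∧
      g (S u) (S u) + ν * ‖u‖ ^ 2
          ≤ (1 + ν⁻¹ * nS ^ 2) * (g (St u) (St u) + ν * ‖u‖ ^ 2) := by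
  intro u
  refine ⟨?_, add_le_one_add_inv_mul_mul_add hν (sq_nonneg nS) (hSbound u) (hgpos (St u))⟩
  rw [one_div_mul_eq_div, div_le_iff₀' (by positivity)]
  exact add_le_one_add_inv_mul_mul_add hν (sq_nonneg nSt) (hStbound u) (hgpos (S u))

/-- With `⟨Mx,x⟩ = ‖y‖_G² + ν‖u‖_U²`, `x = (Su,u)`, `x̃ = (S̃u,u)`:
`(1/(1+ν⁻¹‖S̃‖²))⟨Mx̃,x̃⟩ ≤ ⟨Mx,x⟩ ≤ (1+ν⁻¹‖S‖²)⟨Mx̃,x̃⟩`. -/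
theorem stmt8
    {U : Type*} [NormedAddCommGroup U] [InnerProductSpace ℝ U]
    {Y : Type*} [AddCommGroup Y] [Module ℝ Y]
    (g : Y →ₗ[ℝ] Y →ₗ[ℝ] ℝ)
    (hgsymm : ∀ y z, g y z = g z y) (hgpos : ∀ y, 0 ≤ g y y)
    (S St : U →ₗ[ℝ] Y) (nS nSt : ℝ) (hnS : 0 ≤ nS) (hnSt : 0 ≤ nSt)
    (hSbound : ∀ u, g (S u) (S u) ≤ nS ^ 2 * ‖u‖ ^ 2)
    (hStbound : ∀ u, g (St u) (St u) ≤ nSt ^ 2 * ‖u‖ ^ 2)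
    (ν : ℝ) (hν : 0 < ν) :
    ∀ u : U,
      (1 / (1 + ν⁻¹ * nSt ^ 2)) * (g (St u) (St u) + ν * ‖u‖ ^ 2)
          ≤ g (S u) (S u) + ν * ‖u‖ ^ 2 ∧
      g (S u) (S u) + ν * ‖u‖ ^ 2
          ≤ (1 + ν⁻¹ * nS ^ 2) * (g (St u) (St u) + ν * ‖u‖ ^ 2) :=
  stmt8_general g hgpos S St nS nSt hSbound hStbound ν hν
end

section
/- Let S, S̃ : U → Y be as above with ‖S̃u - Su‖_G ≤ ε‖u‖_U for all u ∈ U, and ν > 0. Then for all u ∈ U: ‖Su‖_G² + ν‖u‖_U² ≤ (1 + ε/√ν + ε²/ν)(‖S̃u‖_G² + ν‖u‖_U²), and symmetrically with S and S̃ exchanged. Consequently the condition number κ of the two quadratic forms satisfies κ ≤ (1 + ε/√ν + ε²/ν)². -/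
/-!
Since `g` is positive semidefinite, `y ↦ √(g y y)` is a seminorm, so the error bound
gives `√(g (S u) (S u)) ≤ √(g (S̃ u) (S̃ u)) + ε ‖u‖`. Squaring, the cross term is
absorbed by Young's inequality `2 y ε r ≤ (ε / √ν) (y² + ν r²)` and the square term by
`ε² r² ≤ (ε² / ν) (y² + ν r²)`.
-/

theorem sq_add_mul_sq_le_of_le_add_mul {x y ε r ν : ℝ} (hx : 0 ≤ x) (hε : 0 ≤ ε)
    (hν : 0 < ν) (h : x ≤ y + ε * r) :
    x ^ 2 + ν * r ^ 2 ≤ (1 + ε / √ν + ε ^ 2 / ν) * (y ^ 2 + ν * r ^ 2) := by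
  set s := √ν
  set δ := ε / s
  have hs : 0 < s := Real.sqrt_pos.mpr hν
  have hδ : 0 ≤ δ := div_nonneg hε hs.le
  have hν_eq : ν = s ^ 2 := (Real.sq_sqrt hν.le).symm
  have hε_eq : ε = δ * s := (div_mul_cancel₀ ε hs.ne').symm
  have hδ_sq : ε ^ 2 / ν = δ ^ 2 := by rw [hν_eq, hε_eq]; field_simp
  have young : 2 * y * (s * r) ≤ y ^ 2 + (s * r) ^ 2 := two_mul_le_add_sq y (s * r)
  have hx_sq : x ^ 2 ≤ (y + δ * (s * r)) ^ 2 := by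
    rw [hε_eq, mul_assoc] at h
    exact pow_le_pow_left₀ hx h 2
  rw [hδ_sq, hν_eq]
  nlinarith [mul_le_mul_of_nonneg_left young hδ, mul_nonneg (sq_nonneg δ) (sq_nonneg y)]

namespace LinearMap.BilinForm

variable {M : Type*} [AddCommGroup M] [Module ℝ M] (B : LinearMap.BilinForm ℝ M)

/-- Cauchy–Schwarz for the symmetric part `B + B.flip`, which is positive semidefinite
whenever `B` is. -/
theorem apply_add_apply_le_of_forall_zero_le (hB : ∀ x, 0 ≤ B x x) (x y : M) :
    B x y + B y x ≤ 2 * √(B x x) * √(B y y) := by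
  have hsymm : ∀ z, 0 ≤ (B + B.flip) z z := fun z ↦ by
    simpa only [LinearMap.add_apply, flip_apply] using add_nonneg (hB z) (hB z)
  have hCS := apply_mul_apply_le_of_forall_zero_le (B + B.flip) hsymm x y
  simp only [LinearMap.add_apply, flip_apply] at hCS
  calc B x y + B y x ≤ √((B x y + B y x) ^ 2) :=
        (le_abs_self _).trans_eq (Real.sqrt_sq_eq_abs _).symm
    _ ≤ √((B x x + B x x) * (B y y + B y y)) := by
      gcongr
      rw [sq]
      nth_rw 2 [add_comm]
      exact hCS
    _ = 2 * √(B x x) * √(B y y) := by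
      rw [← two_mul, ← two_mul, mul_mul_mul_comm, ← sq, Real.sqrt_mul (by positivity),
        Real.sqrt_sq zero_le_two, Real.sqrt_mul (by linarith [hB x]), mul_assoc]

theorem sqrt_apply_add_le (hB : ∀ x, 0 ≤ B x x) (x y : M) :
    √(B (x + y) (x + y)) ≤ √(B x x) + √(B y y) := by
  rw [Real.sqrt_le_left (by positivity)]
  calc B (x + y) (x + y) = B x x + (B x y + B y x) + B y y := by
        simp only [map_add, LinearMap.add_apply]; ring
    _ ≤ B x x + 2 * √(B x x) * √(B y y) + B y y := by
        gcongr; exact apply_add_apply_le_of_forall_zero_le B hB x y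
    _ = (√(B x x) + √(B y y)) ^ 2 := by
        rw [add_sq, Real.sq_sqrt (hB x), Real.sq_sqrt (hB y)]

theorem apply_sub_sub_comm (x y : M) : B (x - y) (x - y) = B (y - x) (y - x) := by
  rw [← neg_sub y x]
  simp only [map_neg, LinearMap.neg_apply, neg_neg]

theorem apply_self_add_mul_sq_le_of_sqrt_apply_sub_le
    (hB : ∀ x, 0 ≤ B x x) {a b : M} {ε ν r : ℝ} (hε : 0 ≤ ε) (hν : 0 < ν)
    (h : √(B (b - a) (b - a)) ≤ ε * r) :
    B a a + ν * r ^ 2 ≤ (1 + ε / √ν + ε ^ 2 / ν) * (B b b + ν * r ^ 2) := by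
  have htri : √(B a a) ≤ √(B b b) + ε * r := by
    calc √(B a a) = √(B (b + (a - b)) (b + (a - b))) := by rw [add_sub_cancel]
      _ ≤ √(B b b) + √(B (a - b) (a - b)) := B.sqrt_apply_add_le hB b (a - b)
      _ ≤ √(B b b) + ε * r := by rw [B.apply_sub_sub_comm]; gcongr
  simpa only [Real.sq_sqrt (hB _)] using
    sq_add_mul_sq_le_of_le_add_mul (Real.sqrt_nonneg _) hε hν htri

end LinearMap.BilinForm

theorem stmt9_general
    {U : Type*} [NormedAddCommGroup U] [InnerProductSpace ℝ U]
    {Y : Type*} [AddCommGroup Y] [Module ℝ Y]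
    (g : Y →ₗ[ℝ] Y →ₗ[ℝ] ℝ)
    (hgpos : ∀ y, 0 ≤ g y y)
    (S St : U →ₗ[ℝ] Y)
    (ε : ℝ) (hε : 0 ≤ ε) (ν : ℝ) (hν : 0 < ν)
    (herr : ∀ u, Real.sqrt (g (St u - S u) (St u - S u)) ≤ ε * ‖u‖) :
    ∀ u : U,
      g (S u) (S u) + ν * ‖u‖ ^ 2
        ≤ (1 + ε / Real.sqrt ν + ε ^ 2 / ν) * (g (St u) (St u) + ν * ‖u‖ ^ 2) ∧
      g (St u) (St u) + ν * ‖u‖ ^ 2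
        ≤ (1 + ε / Real.sqrt ν + ε ^ 2 / ν) * (g (S u) (S u) + ν * ‖u‖ ^ 2) := by
  intro u
  have herr' : √(g (S u - St u) (S u - St u)) ≤ ε * ‖u‖ := by
    rw [LinearMap.BilinForm.apply_sub_sub_comm]
    exact herr u
  exact ⟨LinearMap.BilinForm.apply_self_add_mul_sq_le_of_sqrt_apply_sub_le g hgpos hε hν
      (herr u),
    LinearMap.BilinForm.apply_self_add_mul_sq_le_of_sqrt_apply_sub_le g hgpos hε hν herr'⟩

/-- If `‖S̃u - Su‖_G ≤ ε‖u‖_U` for all `u`, then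
`‖Su‖_G² + ν‖u‖² ≤ (1 + ε/√ν + ε²/ν)(‖S̃u‖_G² + ν‖u‖²)` and symmetrically
with `S` and `S̃` exchanged. -/
theorem stmt9
    {U : Type*} [NormedAddCommGroup U] [InnerProductSpace ℝ U]
    {Y : Type*} [AddCommGroup Y] [Module ℝ Y]
    (g : Y →ₗ[ℝ] Y →ₗ[ℝ] ℝ)
    (hgsymm : ∀ y z, g y z = g z y) (hgpos : ∀ y, 0 ≤ g y y)
    (S St : U →ₗ[ℝ] Y)
    (ε : ℝ) (hε : 0 ≤ ε) (ν : ℝ) (hν : 0 < ν)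
    (herr : ∀ u, Real.sqrt (g (St u - S u) (St u - S u)) ≤ ε * ‖u‖) :
    ∀ u : U,
      g (S u) (S u) + ν * ‖u‖ ^ 2
        ≤ (1 + ε / Real.sqrt ν + ε ^ 2 / ν) * (g (St u) (St u) + ν * ‖u‖ ^ 2) ∧
      g (St u) (St u) + ν * ‖u‖ ^ 2
        ≤ (1 + ε / Real.sqrt ν + ε ^ 2 / ν) * (g (S u) (S u) + ν * ‖u‖ ^ 2) :=
  stmt9_general g hgpos S St ε hε ν hν herr
end

section
/- Let M : X → X* be symmetric, elliptic on V = ker C, and C : X → P* bounded surjective onto a reflexive space P*. Then the saddle point system Mx + C*p = -q'(0)-term, Cx = -c has a unique solution (x,p), and x coincides with the unique minimizer of the quadratic q over the affine set {x : Cx + c = 0}. -/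
/-!
Lift `-c` to some `x₀` by surjectivity of `C` and correct it inside `ker C` by Lax–Milgram, so
that the residual `-(M x + s)` vanishes on `ker C`. By the open mapping theorem `C` is a quotient
map, so this residual factors through a continuous functional on `P*`, which is evaluation at some
`p` because the Hilbert space `P` is reflexive. For a solution `(x, p)` and a feasible `y` the
energy expands as `q y = q x + ½ ⟨M (y - x), y - x⟩` with `y - x ∈ ker C`, so ellipticity gives
both minimality and uniqueness of `x`; uniqueness of `p` is injectivity of `C*`.
-/

open InnerProductSpace

theorem ContinuousLinearMap.exists_comp_eq_of_ker_le {𝕜 E F G : Type*} [NontriviallyNormedField 𝕜]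
    [NormedAddCommGroup E] [NormedSpace 𝕜 E] [CompleteSpace E]
    [NormedAddCommGroup F] [NormedSpace 𝕜 F] [CompleteSpace F]
    [AddCommGroup G] [Module 𝕜 G] [TopologicalSpace G]
    (C : E →L[𝕜] F) (hC : Function.Surjective C) (φ : E →L[𝕜] G) (h : C.ker ≤ φ.ker) :
    ∃ ψ : F →L[𝕜] G, ψ.comp C = φ := by
  obtain ⟨g, hg⟩ :=
    (C : E →ₗ[𝕜] F).exists_rightInverse_of_surjective (LinearMap.range_eq_top.2 hC)
  have hψ : ∀ x, φ (g (C x)) = φ x := fun x => by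
    rw [← sub_eq_zero, ← map_sub]
    apply h
    simpa [sub_eq_zero] using LinearMap.congr_fun hg (C x)
  refine ⟨⟨φ.toLinearMap ∘ₗ g, (C.isQuotientMap hC).continuous_iff.2 ?_⟩, ?_⟩
  · simpa [Function.comp_def, hψ] using φ.continuous
  · ext x; exact hψ x

theorem InnerProductSpace.exists_eq_apply_of_strongDual {P : Type*} [NormedAddCommGroup P]
    [InnerProductSpace ℝ P] [CompleteSpace P] (ψ : StrongDual ℝ (StrongDual ℝ P)) :
    ∃ p : P, ∀ g, ψ g = g p := by
  refine ⟨(toDual ℝ P).symm (ψ.comp (toDual ℝ P).toContinuousLinearEquiv.toContinuousLinearMap),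
    fun g => ?_⟩
  obtain ⟨u, rfl⟩ := (toDual ℝ P).surjective g
  rw [toDual_apply_apply, real_inner_comm, toDual_symm_apply]
  rfl

theorem eq_zero_of_mul_norm_sq_le_of_nonpos {E : Type*} [NormedAddCommGroup E] {v : E} {α a : ℝ}
    (hα : 0 < α) (h : α * ‖v‖ ^ 2 ≤ a) (ha : a ≤ 0) : v = 0 :=
  norm_eq_zero.1 <| pow_eq_zero_iff two_ne_zero |>.1 <|
    le_antisymm (nonpos_of_mul_nonpos_right (h.trans ha) hα) (sq_nonneg _)

section SaddlePoint

variable {X P : Type*} [NormedAddCommGroup X] [InnerProductSpace ℝ X]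
  [NormedAddCommGroup P] (M : X →L[ℝ] X →L[ℝ] ℝ) {α : ℝ}

theorem exists_mem_forall_mem_apply_eq_of_coercive_on {V : Submodule ℝ X} [CompleteSpace V]
    (hα : 0 < α) (hM : ∀ v ∈ V, α * ‖v‖ ^ 2 ≤ M v v) (f : StrongDual ℝ X) :
    ∃ u ∈ V, ∀ v ∈ V, M u v = f v := by
  set B := M.bilinearComp V.subtypeL V.subtypeL
  have hB : IsCoercive B := ⟨α, hα, fun u => by
    simpa [B, sq, mul_assoc] using hM u u.2⟩
  set u := hB.continuousLinearEquivOfBilin.symm ((toDual ℝ V).symm (f.comp V.subtypeL))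
  refine ⟨u, u.2, fun v hv => ?_⟩
  have := hB.continuousLinearEquivOfBilin_apply u ⟨v, hv⟩
  simp only [u, ContinuousLinearEquiv.apply_symm_apply, toDual_symm_apply] at this
  exact this.symm

theorem exists_apply_eq_apply_of_ker_le {E : Type*} [NormedAddCommGroup E] [NormedSpace ℝ E]
    [CompleteSpace E] [InnerProductSpace ℝ P] [CompleteSpace P]
    (C : E →L[ℝ] StrongDual ℝ P) (hC : Function.Surjective C) (φ : StrongDual ℝ E)
    (h : C.ker ≤ φ.ker) : ∃ p : P, ∀ v, φ v = C v p := by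
  obtain ⟨ψ, hψ⟩ := C.exists_comp_eq_of_ker_le hC φ h
  obtain ⟨p, hp⟩ := exists_eq_apply_of_strongDual ψ
  exact ⟨p, fun v => by rw [← hψ, ContinuousLinearMap.comp_apply, hp]⟩

theorem exists_saddlePoint [CompleteSpace X] [InnerProductSpace ℝ P] [CompleteSpace P]
    (C : X →L[ℝ] StrongDual ℝ P) (hC : Function.Surjective C) (hα : 0 < α)
    (hM : ∀ v, C v = 0 → α * ‖v‖ ^ 2 ≤ M v v) (s : StrongDual ℝ X) (c : StrongDual ℝ P) :
    ∃ x p, (∀ v, M x v + C v p + s v = 0) ∧ C x + c = 0 := by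
  obtain ⟨x₀, hx₀⟩ := hC (-c)
  have : CompleteSpace C.ker := C.isClosed_ker.completeSpace_coe
  obtain ⟨u, hu, hMu⟩ :=
    exists_mem_forall_mem_apply_eq_of_coercive_on (V := C.ker) M hα hM (-(M x₀ + s))
  obtain ⟨p, hp⟩ := exists_apply_eq_apply_of_ker_le C hC (-(M (x₀ + u) + s)) fun v hv => by
    simp [hMu v hv]
  refine ⟨x₀ + u, p, fun v => ?_, ?_⟩
  · rw [← hp v]
    simp only [map_add, add_apply, neg_apply]
    ring
  · rw [map_add, hx₀, show C u = 0 from hu, add_zero, neg_add_cancel]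

end SaddlePoint

section Energy

variable {X P : Type*} [NormedAddCommGroup X] [NormedSpace ℝ X]
  [NormedAddCommGroup P] [NormedSpace ℝ P]
  (M : X →L[ℝ] X →L[ℝ] ℝ) (C : X →L[ℝ] StrongDual ℝ P) {α : ℝ}

theorem saddlePoint_homogeneous_eq_zero (hC : Function.Surjective C) (hα : 0 < α)
    (hM : ∀ v, C v = 0 → α * ‖v‖ ^ 2 ≤ M v v) {d : X} {r : P}
    (hd : ∀ v, M d v + C v r = 0) (hCd : C d = 0) : d = 0 ∧ r = 0 := by
  have hd0 : d = 0 := eq_zero_of_mul_norm_sq_le_of_nonpos hα (hM d hCd)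
    (by simpa [hCd] using (hd d).le)
  refine ⟨hd0, SeparatingDual.eq_zero_of_forall_dual_eq_zero (R := ℝ) fun g => ?_⟩
  obtain ⟨v, rfl⟩ := hC g
  simpa [hd0] using hd v

theorem saddlePoint_unique (hC : Function.Surjective C) (hα : 0 < α)
    (hM : ∀ v, C v = 0 → α * ‖v‖ ^ 2 ≤ M v v) (s : StrongDual ℝ X) (c : StrongDual ℝ P)
    {x x' : X} {p p' : P} (h : (∀ v, M x v + C v p + s v = 0) ∧ C x + c = 0)
    (h' : (∀ v, M x' v + C v p' + s v = 0) ∧ C x' + c = 0) : x' = x ∧ p' = p := by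
  have := saddlePoint_homogeneous_eq_zero M C hC hα hM (d := x' - x) (r := p' - p)
    (fun v => by simp only [map_sub, sub_apply]; linarith [h.1 v, h'.1 v])
    (by rw [map_sub, sub_eq_zero, ← add_right_cancel_iff, h.2, h'.2])
  simpa only [sub_eq_zero] using this

theorem quadratic_apply_add (hM : ∀ x y, M x y = M y x) (s : StrongDual ℝ X) (x d : X) :
    1 / 2 * M (x + d) (x + d) + s (x + d) =
      1 / 2 * M x x + s x + (M x d + s d) + 1 / 2 * M d d := by
  simp only [map_add, add_apply, hM d x]
  ring

theorem saddlePoint_energy_eq (hM : ∀ x y, M x y = M y x) (s : StrongDual ℝ X)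
    (c : StrongDual ℝ P) {x : X} {p : P} (h : (∀ v, M x v + C v p + s v = 0) ∧ C x + c = 0)
    {y : X} (hy : C y + c = 0) :
    C (y - x) = 0 ∧ 1 / 2 * M y y + s y = 1 / 2 * M x x + s x + 1 / 2 * M (y - x) (y - x) := by
  have hCd : C (y - x) = 0 := by rw [map_sub, sub_eq_zero, ← add_left_inj c, hy, h.2]
  have hvar : M x (y - x) + s (y - x) = 0 := by simpa [hCd] using h.1 (y - x)
  refine ⟨hCd, ?_⟩
  simpa only [add_sub_cancel, hvar, add_zero] using quadratic_apply_add M hM s x (y - x)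

end Energy

/-- For `M` symmetric, elliptic on `ker C`, and `C` bounded
surjective, the saddle point system `Mx + C*p + s = 0`, `Cx + c = 0` has a
unique solution `(x,p)`, and its `x`-component is the unique minimizer of the
quadratic `q(x) = ½⟨Mx,x⟩ + ⟨s,x⟩` over `{x : Cx + c = 0}`. -/
theorem stmt16
    {X Pspace : Type*}
    [NormedAddCommGroup X] [InnerProductSpace ℝ X] [CompleteSpace X]
    [NormedAddCommGroup Pspace] [InnerProductSpace ℝ Pspace] [CompleteSpace Pspace]
    (M : X →L[ℝ] (X →L[ℝ] ℝ)) (hMsymm : ∀ x y, M x y = M y x)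
    (C : X →L[ℝ] (Pspace →L[ℝ] ℝ)) (hCsurj : Function.Surjective C)
    (α : ℝ) (hα : 0 < α)
    (hell : ∀ v : X, C v = 0 → α * ‖v‖ ^ 2 ≤ M v v)
    (s : X →L[ℝ] ℝ) (c : Pspace →L[ℝ] ℝ) :
    (∃! z : X × Pspace,
      (∀ v : X, M z.1 v + C v z.2 + s v = 0) ∧ C z.1 + c = 0) ∧
    (∀ z : X × Pspace,
      ((∀ v : X, M z.1 v + C v z.2 + s v = 0) ∧ C z.1 + c = 0) →
      (∀ x : X, C x + c = 0 →
        (1 / 2) * M z.1 z.1 + s z.1 ≤ (1 / 2) * M x x + s x) ∧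
      (∀ x : X, C x + c = 0 →
        (1 / 2) * M x x + s x ≤ (1 / 2) * M z.1 z.1 + s z.1 → x = z.1)) := by
  refine ⟨?_, fun z hz => ?_⟩
  · obtain ⟨x, p, hxp⟩ := exists_saddlePoint M C hCsurj hα hell s c
    refine ⟨(x, p), hxp, fun z hz => ?_⟩
    obtain ⟨rfl, rfl⟩ := saddlePoint_unique M C hCsurj hα hell s c hxp hz
    rfl
  · refine ⟨fun x hx => ?_, fun x hx hle => ?_⟩
    · obtain ⟨hCd, heq⟩ := saddlePoint_energy_eq M C hMsymm s c hz hx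
      rw [heq]
      linarith [hell _ hCd, mul_nonneg hα.le (sq_nonneg ‖x - z.1‖)]
    · obtain ⟨hCd, heq⟩ := saddlePoint_energy_eq M C hMsymm s c hz hx
      exact sub_eq_zero.1 <| eq_zero_of_mul_norm_sq_le_of_nonpos hα (hell _ hCd) (by linarith)
end
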